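/- Define ψ ∈ L²(ℝ) by ψ̂ = 1 on [4/3, 3/2), ψ̂ = 1/√2 on [−1,−2/3) ∪ [1,4/3) ∪ [3/2,2], ψ̂ = −1/√2 on [−3/2,−1), and ψ̂ = 0 otherwise. Then Σ_{j∈ℤ} |ψ̂((3/2)^j ξ)|² = 1 for almost every ξ ∈ ℝ. -/
import Mathlib


open MeasureTheory

/-- The Fourier transform `ψ̂` of the counterexample generator from
Example 4.5: `ψ̂ = 1` on `[4/3, 3/2)`, `ψ̂ = 1/√2` on `[-1,-2/3) ∪ [1,4/3) ∪ [3/2,2]`,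
`ψ̂ = -1/√2` on `[-3/2,-1)`, and `ψ̂ = 0` otherwise. -/
noncomputable def psiHat (ξ : ℝ) : ℝ :=
  if ξ ∈ Set.Ico (4 / 3 : ℝ) (3 / 2) then 1
  else if ξ ∈ Set.Ico (-1 : ℝ) (-2 / 3) ∪ Set.Ico (1 : ℝ) (4 / 3) ∪
      Set.Icc (3 / 2 : ℝ) 2 then 1 / Real.sqrt 2
  else if ξ ∈ Set.Ico (-3 / 2 : ℝ) (-1) then -(1 / Real.sqrt 2)
  else 0

lemma psiHat_eq_zero {x : ℝ} (h : x < -3/2 ∨ (-2/3 < x ∧ x < 1) ∨ 2 < x) :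
    psiHat x = 0 := by
  unfold psiHat
  split_ifs with h1 h2 h3
  · exfalso
    simp only [Set.mem_Ico] at h1
    rcases h with h | ⟨ha, hb⟩ | h <;> linarith [h1.1, h1.2]
  · exfalso
    simp only [Set.mem_union, Set.mem_Ico, Set.mem_Icc] at h2
    rcases h2 with (⟨a, b⟩ | ⟨a, b⟩) | ⟨a, b⟩ <;>
      rcases h with h | ⟨ha, hb⟩ | h <;> linarith
  · exfalso
    simp only [Set.mem_Ico] at h3
    rcases h with h | ⟨ha, hb⟩ | h <;> linarith [h3.1, h3.2]
  · rfl

lemma inv_sqrt_two_sq : (1 / Real.sqrt 2) ^ 2 = 1 / 2 := by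
  rw [div_pow, one_pow, Real.sq_sqrt (by norm_num : (0:ℝ) ≤ 2)]

lemma psiHat_sq_half {x : ℝ}
    (h : x ∈ Set.Ico (-1 : ℝ) (-2/3) ∪ Set.Ico (1 : ℝ) (4/3) ∪ Set.Icc (3/2 : ℝ) 2
        ∨ x ∈ Set.Ico (-3/2 : ℝ) (-1)) :
    psiHat x ^ 2 = 1 / 2 := by
  unfold psiHat
  split_ifs with h1 h2 h3
  · exfalso
    simp only [Set.mem_Ico, Set.mem_union, Set.mem_Icc] at h h1
    rcases h with ((⟨a,b⟩|⟨a,b⟩)|⟨a,b⟩) | ⟨a,b⟩ <;> linarith [h1.1, h1.2]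
  · exact inv_sqrt_two_sq
  · rw [neg_pow, inv_sqrt_two_sq]; norm_num
  · exfalso; rcases h with h | h
    · exact h2 h
    · exact h3 h

lemma psiHat_sq_one {x : ℝ} (h : x ∈ Set.Ico (4/3 : ℝ) (3/2)) :
    psiHat x ^ 2 = 1 := by
  unfold psiHat
  rw [if_pos]
  · norm_num
  · simpa using h

lemma sum_eq (ξ : ℝ) (m : ℤ)
    (h0 : ∀ j : ℤ, j ≠ m → j ≠ m + 1 → psiHat ((3/2 : ℝ) ^ j * ξ) ^ 2 = 0)
    (h1 : psiHat ((3/2 : ℝ) ^ m * ξ) ^ 2 + psiHat ((3/2 : ℝ) ^ (m+1) * ξ) ^ 2 = 1) :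
    ∑' j : ℤ, psiHat ((3/2 : ℝ) ^ j * ξ) ^ 2 = 1 := by
  rw [tsum_eq_sum (s := {m, m + 1}) (by
    intro i hi
    simp only [Finset.mem_insert, Finset.mem_singleton] at hi
    push_neg at hi
    exact h0 i hi.1 hi.2)]
  rw [Finset.sum_pair (by omega)]
  exact h1

lemma zpow_le_twothirds {k : ℤ} (hk : k ≤ -1) : (3/2 : ℝ) ^ k ≤ 2/3 := by
  have := zpow_le_zpow_right₀ (by norm_num : (1:ℝ) ≤ 3/2) hk
  rwa [zpow_neg_one, show ((3:ℝ)/2)⁻¹ = 2/3 by norm_num] at this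

lemma zpow_ge_nineforths {k : ℤ} (hk : 2 ≤ k) : (9/4 : ℝ) ≤ (3/2 : ℝ) ^ k := by
  have := zpow_le_zpow_right₀ (by norm_num : (1:ℝ) ≤ 3/2) hk
  rwa [show ((3:ℝ)/2) ^ (2:ℤ) = 9/4 by norm_num] at this

lemma zpow_ge_threehalves {k : ℤ} (hk : 1 ≤ k) : (3/2 : ℝ) ≤ (3/2 : ℝ) ^ k := by
  have := zpow_le_zpow_right₀ (by norm_num : (1:ℝ) ≤ 3/2) hk
  rwa [zpow_one] at this

lemma zpow_pos' (k : ℤ) : (0:ℝ) < (3/2 : ℝ) ^ k := zpow_pos (by norm_num) k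

lemma key (ξ : ℝ) (hne : ξ ≠ 0)
    (hb : ∀ j : ℤ, (3/2 : ℝ) ^ j * ξ ≠ 4/3 ∧ (3/2 : ℝ) ^ j * ξ ≠ -2/3) :
    ∑' j : ℤ, psiHat ((3/2 : ℝ) ^ j * ξ) ^ 2 = 1 := by
  rcases lt_or_gt_of_ne hne with hneg | hpos
  · -- negative case
    obtain ⟨n, hn1, hn2⟩ := exists_mem_Ico_zpow (x := -ξ) (y := (3/2 : ℝ))
      (by linarith) (by norm_num)
    set m : ℤ := -(n + 1) with hm
    set η : ℝ := (3/2 : ℝ) ^ m * ξ with hη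
    have hsplit : ∀ j : ℤ, (3/2 : ℝ) ^ j * ξ = (3/2 : ℝ) ^ (j - m) * η := by
      intro j
      rw [hη, ← mul_assoc, ← zpow_add₀ (by norm_num : (3/2:ℝ) ≠ 0)]
      congr 2
      omega
    have hml : -1 < η := by
      have h2 : (3/2:ℝ) ^ m * (-ξ) < (3/2 : ℝ) ^ m * (3/2 : ℝ) ^ (n+1) :=
        mul_lt_mul_of_pos_left hn2 (zpow_pos' m)
      rw [← zpow_add₀ (by norm_num : (3/2:ℝ) ≠ 0), hm, neg_add_cancel, zpow_zero] at h2
      rw [hη]; nlinarith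
    have hmr : η ≤ -2/3 := by
      have h2 : (3/2:ℝ) ^ m * (3/2 : ℝ) ^ n ≤ (3/2 : ℝ) ^ m * (-ξ) :=
        mul_le_mul_of_nonneg_left hn1 (zpow_pos' m).le
      rw [← zpow_add₀ (by norm_num : (3/2:ℝ) ≠ 0), hm,
        show -(n+1) + n = -1 by omega, zpow_neg_one,
        show ((3:ℝ)/2)⁻¹ = 2/3 by norm_num] at h2
      rw [hη]; nlinarith
    have hmr' : η < -2/3 := lt_of_le_of_ne hmr (hb m).2
    refine sum_eq ξ m ?_ ?_
    · intro j hj1 hj2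
      rw [hsplit j]
      set k := j - m with hk
      have hz : psiHat ((3/2:ℝ) ^ k * η) = 0 := by
        apply psiHat_eq_zero
        rcases le_or_gt k (-1) with hkle | hkgt
        · right; left
          have h1 : (3/2:ℝ) ^ k * η ≥ (2/3) * η :=
            mul_le_mul_of_nonpos_right (zpow_le_twothirds hkle) (by linarith)
          constructor <;>
            nlinarith [mul_neg_of_pos_of_neg (zpow_pos' k) (show η < 0 by linarith)]
        · left
          have hk2 : 2 ≤ k := by omega
          have h1 : (3/2:ℝ) ^ k * η ≤ (9/4) * η :=
            mul_le_mul_of_nonpos_right (zpow_ge_nineforths hk2) (by linarith)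
          nlinarith
      rw [hz]; norm_num
    · have e1 : psiHat ((3/2 : ℝ) ^ m * ξ) ^ 2 = 1/2 := by
        apply psiHat_sq_half
        left; left; left
        simp only [Set.mem_Ico]
        exact ⟨by rw [← hη]; linarith, by rw [← hη]; linarith⟩
      have e2 : psiHat ((3/2 : ℝ) ^ (m+1) * ξ) ^ 2 = 1/2 := by
        apply psiHat_sq_half
        right
        have h3 : (3/2 : ℝ) ^ (m+1) * ξ = (3/2) * η := by
          rw [hsplit (m+1), show m + 1 - m = 1 by omega, zpow_one]
        rw [h3]
        simp only [Set.mem_Ico]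
        constructor <;> nlinarith
      rw [e1, e2]; norm_num
  · -- positive case
    obtain ⟨n, hn1, hn2⟩ := exists_mem_Ico_zpow (x := ξ) (y := (3/2 : ℝ))
      hpos (by norm_num)
    set m : ℤ := -n with hm
    set η : ℝ := (3/2 : ℝ) ^ m * ξ with hη
    have hsplit : ∀ j : ℤ, (3/2 : ℝ) ^ j * ξ = (3/2 : ℝ) ^ (j - m) * η := by
      intro j
      rw [hη, ← mul_assoc, ← zpow_add₀ (by norm_num : (3/2:ℝ) ≠ 0)]
      congr 2
      omega
    have hml : 1 ≤ η := by
      have h2 : (3/2:ℝ) ^ m * (3/2 : ℝ) ^ n ≤ (3/2 : ℝ) ^ m * ξ :=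
        mul_le_mul_of_nonneg_left hn1 (zpow_pos' m).le
      rwa [← zpow_add₀ (by norm_num : (3/2:ℝ) ≠ 0), hm, neg_add_cancel, zpow_zero] at h2
    have hmr : η < 3/2 := by
      have h2 : (3/2:ℝ) ^ m * ξ < (3/2 : ℝ) ^ m * (3/2 : ℝ) ^ (n+1) :=
        mul_lt_mul_of_pos_left hn2 (zpow_pos' m)
      rwa [← zpow_add₀ (by norm_num : (3/2:ℝ) ≠ 0), hm,
        show -n + (n+1) = 1 by omega, zpow_one] at h2
    have hne43 : η ≠ 4/3 := (hb m).1
    have hzero : ∀ j : ℤ, j ≠ m → j ≠ m + 1 → psiHat ((3/2 : ℝ) ^ j * ξ) ^ 2 = 0 := by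
      intro j hj1 hj2
      rw [hsplit j]
      set k := j - m with hk
      have hz : psiHat ((3/2:ℝ) ^ k * η) = 0 := by
        apply psiHat_eq_zero
        rcases le_or_gt k (-1) with hkle | hkgt
        · right; left
          have h1 : (3/2:ℝ) ^ k * η ≤ (2/3) * η :=
            mul_le_mul_of_nonneg_right (zpow_le_twothirds hkle) (by linarith)
          constructor <;> nlinarith [zpow_pos' k]
        · right; right
          have hk2 : 2 ≤ k := by omega
          have h1 : (9/4:ℝ) * η ≤ (3/2:ℝ) ^ k * η :=
            mul_le_mul_of_nonneg_right (zpow_ge_nineforths hk2) (by linarith)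
          nlinarith
      rw [hz]; norm_num
    rcases lt_or_gt_of_ne hne43 with hcase | hcase
    · -- η ∈ [1, 4/3)
      refine sum_eq ξ m hzero ?_
      have e1 : psiHat ((3/2 : ℝ) ^ m * ξ) ^ 2 = 1/2 := by
        apply psiHat_sq_half
        left; left; right
        simp only [Set.mem_Ico]
        exact ⟨by rw [← hη]; linarith, by rw [← hη]; linarith⟩
      have e2 : psiHat ((3/2 : ℝ) ^ (m+1) * ξ) ^ 2 = 1/2 := by
        apply psiHat_sq_half
        left; right
        have h3 : (3/2 : ℝ) ^ (m+1) * ξ = (3/2) * η := by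
          rw [hsplit (m+1), show m + 1 - m = 1 by omega, zpow_one]
        rw [h3]
        simp only [Set.mem_Icc]
        constructor <;> nlinarith
      rw [e1, e2]; norm_num
    · -- η ∈ (4/3, 3/2)
      refine sum_eq ξ m hzero ?_
      have e1 : psiHat ((3/2 : ℝ) ^ m * ξ) ^ 2 = 1 := by
        apply psiHat_sq_one
        simp only [Set.mem_Ico]
        exact ⟨by rw [← hη]; linarith, by rw [← hη]; linarith⟩
      have e2 : psiHat ((3/2 : ℝ) ^ (m+1) * ξ) ^ 2 = 0 := by
        have h3 : (3/2 : ℝ) ^ (m+1) * ξ = (3/2) * η := by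
          rw [hsplit (m+1), show m + 1 - m = 1 by omega, zpow_one]
        rw [h3, psiHat_eq_zero (by right; right; nlinarith)]
        norm_num
      rw [e1, e2]; norm_num

/-- the Calderón sum condition `Σ_{j∈ℤ} |ψ̂((3/2)^j ξ)|² = 1` holds
for almost every `ξ ∈ ℝ`. -/
theorem stmt19 :
    ∀ᵐ ξ : ℝ ∂(volume : Measure ℝ),
      ∑' j : ℤ, (psiHat ((3 / 2 : ℝ) ^ j * ξ)) ^ 2 = 1 := by
  set B : Set ℝ :=
    {ξ : ℝ | ξ = 0 ∨ ∃ j : ℤ, (3/2 : ℝ) ^ j * ξ = 4/3 ∨ (3/2 : ℝ) ^ j * ξ = -2/3}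
    with hBdef
  have hBc : B.Countable := by
    have hsub : B ⊆ ⋃ j : ℤ,
        ({0, ((3/2 : ℝ) ^ j)⁻¹ * (4/3), ((3/2 : ℝ) ^ j)⁻¹ * (-2/3)} : Set ℝ) := by
      intro ξ hξ
      rcases hξ with h0 | ⟨j, hj | hj⟩
      · exact Set.mem_iUnion.2 ⟨0, by simp [h0]⟩
      · refine Set.mem_iUnion.2 ⟨j, ?_⟩
        have : ξ = ((3/2 : ℝ) ^ j)⁻¹ * (4/3) := by
          rw [← hj, ← mul_assoc, inv_mul_cancel₀ (zpow_pos' j).ne', one_mul]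
        simp [this]
      · refine Set.mem_iUnion.2 ⟨j, ?_⟩
        have : ξ = ((3/2 : ℝ) ^ j)⁻¹ * (-2/3) := by
          rw [← hj, ← mul_assoc, inv_mul_cancel₀ (zpow_pos' j).ne', one_mul]
        simp [this]
    exact Set.Countable.mono hsub
      (Set.countable_iUnion fun j =>
        (((Set.countable_singleton _).insert _).insert _))
  have hB0 : volume B = 0 := hBc.measure_zero _
  have hae : ∀ᵐ ξ : ℝ ∂(volume : Measure ℝ), ξ ∉ B :=
    measure_eq_zero_iff_ae_notMem.mp hB0
  filter_upwards [hae] with ξ hξ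
  rw [hBdef] at hξ
  simp only [Set.mem_setOf_eq, not_or, not_exists] at hξ
  apply key ξ hξ.1
  intro j
  have := hξ.2 j
  push_neg at this
  exact this
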